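/- Let g(y) := (−y³ + 2y² + y − 1)/(2y² + 4y − 3). For all reals m₁, m₂ with 0 ≤ m₂ ≤ m₁ ≤ 1/2, the condition (m₁ ≥ g(m₂) and m₂ ≥ g(m₁)) holds if and only if the condition (m₁ ≥ 1/3 and m₂ ≥ g(m₁)) holds. (This equivalence shows that Claim 1 and Theorem 2(3) state the same characterization.) -/

import Mathlib

/-!
On `[0, 1/2]` the denominator of `g` is negative, so `g y ≤ x` amounts to
`F(x, y) := (-y³ + 2y² + y - 1) - x (2y² + 4y - 3) ≥ 0`. On the diagonal
`F(x, x) = (3x - 1)(1 - x - x²)`, whence `g x ≤ x ↔ 1/3 ≤ x`; and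
`F(x, y) - F(y, x) = (x - y)((x + y - 1)² + xy + 1)`, so `g x ≤ y` implies `g y ≤ x` when `y ≤ x`.
With `g m₁ ≤ m₂ ≤ m₁` the two conditions of the theorem are then both equivalent to `g m₁ ≤ m₂`.
-/

/-- `g(y) := (−y³ + 2y² + y − 1)/(2y² + 4y − 3)`. -/
noncomputable def g (y : ℝ) : ℝ := (-y^3 + 2*y^2 + y - 1) / (2*y^2 + 4*y - 3)

lemma g_denom_neg {y : ℝ} (hy₀ : 0 ≤ y) (hy₁ : y ≤ 1/2) : 2*y^2 + 4*y - 3 < 0 := by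
  nlinarith

lemma g_le_iff {x y : ℝ} (hy₀ : 0 ≤ y) (hy₁ : y ≤ 1/2) :
    g y ≤ x ↔ x * (2*y^2 + 4*y - 3) ≤ -y^3 + 2*y^2 + y - 1 :=
  div_le_iff_of_neg (g_denom_neg hy₀ hy₁)

lemma g_le_self_iff {x : ℝ} (hx₀ : 0 ≤ x) (hx₁ : x ≤ 1/2) : g x ≤ x ↔ 1/3 ≤ x := by
  have hq : 0 < 1 - x - x^2 := by nlinarith
  have hdiag : -x^3 + 2*x^2 + x - 1 - x * (2*x^2 + 4*x - 3) = (3*x - 1) * (1 - x - x^2) := by ring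
  rw [g_le_iff hx₀ hx₁, ← sub_nonneg, hdiag]
  constructor
  · intro h
    nlinarith [(mul_nonneg_iff_of_pos_right hq).1 h]
  · intro h
    exact mul_nonneg (by linarith) hq.le

lemma g_le_of_le_of_g_le {x y : ℝ} (hy₀ : 0 ≤ y) (hyx : y ≤ x) (hx₁ : x ≤ 1/2)
    (h : g x ≤ y) : g y ≤ x := by
  rw [g_le_iff (hy₀.trans hyx) hx₁] at h
  rw [g_le_iff hy₀ (hyx.trans hx₁)]
  have hswap : 0 ≤ (x - y) * ((x + y - 1)^2 + x*y + 1) :=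
    mul_nonneg (sub_nonneg.2 hyx) (by positivity [mul_nonneg (hy₀.trans hyx) hy₀])
  nlinarith

/-- For `0 ≤ m₂ ≤ m₁ ≤ 1/2`: `(m₁ ≥ g(m₂) ∧ m₂ ≥ g(m₁)) ↔ (m₁ ≥ 1/3 ∧ m₂ ≥ g(m₁))`. -/
theorem claim_thm_equivalence (m₁ m₂ : ℝ) (h0 : 0 ≤ m₂) (h1 : m₂ ≤ m₁) (h2 : m₁ ≤ 1/2) :
    (g m₂ ≤ m₁ ∧ g m₁ ≤ m₂) ↔ (1/3 ≤ m₁ ∧ g m₁ ≤ m₂) := by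
  constructor
  · rintro ⟨-, h⟩
    exact ⟨(g_le_self_iff (h0.trans h1) h2).1 (h.trans h1), h⟩
  · rintro ⟨-, h⟩
    exact ⟨g_le_of_le_of_g_le h0 h1 h2 h, h⟩
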